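/- Let A ∘ B ≤ I for n×k and k×m Boolean matrices A and B. Then there exists a set F of formal concepts of I with |F| ≤ k such that A_F ∘ B_F ≤ I and E(I, A_F ∘ B_F) ≤ E(I, A∘B), where A_F and B_F are the n×|F| and |F|×m Boolean matrices whose columns (resp. rows) are the characteristic vectors of the extents (resp. intents) of the concepts in F. -/

import Mathlib

/-- `C↑`: attributes shared by all objects in `C`. -/
def up {n m : ℕ} (I : Fin n → Fin m → Bool) (C : Finset (Fin n)) : Finset (Fin m) :=
  Finset.univ.filter fun j => ∀ i ∈ C, I i j = true

/-- `D↓`: objects sharing all attributes in `D`. -/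
def dn {n m : ℕ} (I : Fin n → Fin m → Bool) (D : Finset (Fin m)) : Finset (Fin n) :=
  Finset.univ.filter fun i => ∀ j ∈ D, I i j = true

/-- A formal concept of `I`: a pair `⟨C,D⟩` with `C↑ = D` and `D↓ = C`. -/
def isConcept {n m : ℕ} (I : Fin n → Fin m → Bool)
    (p : Finset (Fin n) × Finset (Fin m)) : Prop :=
  up I p.1 = p.2 ∧ dn I p.2 = p.1

/-- The interval `[γ(C), μ(D)]` in the concept lattice of `I`
(concepts ordered by extent inclusion). -/
def interval {n m : ℕ} (I : Fin n → Fin m → Bool)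
    (C : Finset (Fin n)) (D : Finset (Fin m)) :
    Set (Finset (Fin n) × Finset (Fin m)) :=
  {p | isConcept I p ∧ dn I (up I C) ⊆ p.1 ∧ p.1 ⊆ dn I D}

/-- The Boolean matrix `A_F ∘ B_F` determined by a set `F` of concepts:
entry `(i,j)` is 1 iff some concept in `F` covers `(i,j)`. -/
def cov {n m : ℕ} (F : Finset (Finset (Fin n) × Finset (Fin m))) :
    Fin n → Fin m → Bool :=
  fun i j => decide (∃ p ∈ F, i ∈ p.1 ∧ j ∈ p.2)

/-- Boolean matrix product. -/
def bmul {n k m : ℕ} (A : Fin n → Fin k → Bool) (B : Fin k → Fin m → Bool) :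
    Fin n → Fin m → Bool := fun i j => decide (∃ l, A i l = true ∧ B l j = true)

/-- Hamming distance between Boolean matrices. -/
def Ham {n m : ℕ} (C D : Fin n → Fin m → Bool) : ℕ :=
  (Finset.univ.filter fun p : Fin n × Fin m => C p.1 p.2 ≠ D p.1 p.2).card

/-!
Each factor `l` of `A ∘ B` is a rectangle `C × D` inside `I`, where `C` is the support of the
`l`-th column of `A` and `D` that of the `l`-th row of `B`. Enlarging it to the concept
`⟨C↑↓, C↑⟩` keeps it inside `I` while covering at least `C × D`, since `D ⊆ C↑`. The resulting
at most `k` concepts cover everything `A ∘ B` covers and nothing outside `I`, so they can only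
get closer to `I`.
-/

section Concepts

variable {n m : ℕ} {I : Fin n → Fin m → Bool}

@[simp]
lemma mem_up {C : Finset (Fin n)} {j : Fin m} : j ∈ up I C ↔ ∀ i ∈ C, I i j = true := by
  simp [up]

@[simp]
lemma mem_dn {D : Finset (Fin m)} {i : Fin n} : i ∈ dn I D ↔ ∀ j ∈ D, I i j = true := by
  simp [dn]

lemma subset_dn_up (C : Finset (Fin n)) : C ⊆ dn I (up I C) :=
  fun i hi => mem_dn.mpr fun _ hj => mem_up.mp hj i hi

lemma subset_up_dn (D : Finset (Fin m)) : D ⊆ up I (dn I D) :=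
  fun j hj => mem_up.mpr fun _ hi => mem_dn.mp hi j hj

lemma up_anti {C C' : Finset (Fin n)} (h : C ⊆ C') : up I C' ⊆ up I C :=
  fun _ hj => mem_up.mpr fun i hi => mem_up.mp hj i (h hi)

lemma up_dn_up (C : Finset (Fin n)) : up I (dn I (up I C)) = up I C :=
  (up_anti (subset_dn_up C)).antisymm (subset_up_dn (up I C))

variable (I) in
def closureConcept (C : Finset (Fin n)) : Finset (Fin n) × Finset (Fin m) :=
  (dn I (up I C), up I C)

lemma isConcept_closureConcept (C : Finset (Fin n)) : isConcept I (closureConcept I C) :=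
  ⟨up_dn_up C, rfl⟩

lemma cov_le_of_isConcept {F : Finset (Finset (Fin n) × Finset (Fin m))}
    (hF : ∀ p ∈ F, isConcept I p) (i : Fin n) (j : Fin m) : cov F i j ≤ I i j := by
  rw [Bool.le_iff_imp]
  intro hcov
  obtain ⟨p, hp, hi, hj⟩ := of_decide_eq_true hcov
  rw [← (hF p hp).2, mem_dn] at hi
  exact hi j hj

end Concepts

section Factors

variable {n m k : ℕ}

def colSupport (A : Fin n → Fin k → Bool) (l : Fin k) : Finset (Fin n) :=
  Finset.univ.filter fun i => A i l = true

def factorConcepts (I : Fin n → Fin m → Bool) (A : Fin n → Fin k → Bool) :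
    Finset (Finset (Fin n) × Finset (Fin m)) :=
  Finset.univ.image fun l => closureConcept I (colSupport A l)

lemma card_factorConcepts_le (I : Fin n → Fin m → Bool) (A : Fin n → Fin k → Bool) :
    (factorConcepts I A).card ≤ k :=
  Finset.card_image_le.trans (Finset.card_fin k).le

lemma isConcept_of_mem_factorConcepts {I : Fin n → Fin m → Bool} {A : Fin n → Fin k → Bool}
    {p : Finset (Fin n) × Finset (Fin m)} (hp : p ∈ factorConcepts I A) : isConcept I p := by
  obtain ⟨l, -, rfl⟩ := Finset.mem_image.mp hp
  exact isConcept_closureConcept _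

lemma bmul_le_cov_factorConcepts {I : Fin n → Fin m → Bool} {A : Fin n → Fin k → Bool}
    {B : Fin k → Fin m → Bool} (h : ∀ i j, bmul A B i j ≤ I i j) (i : Fin n) (j : Fin m) :
    bmul A B i j ≤ cov (factorConcepts I A) i j := by
  rw [Bool.le_iff_imp]
  intro hAB
  obtain ⟨l, hil, hlj⟩ := of_decide_eq_true hAB
  have hj : j ∈ up I (colSupport A l) := mem_up.mpr fun i' hi' =>
    Bool.le_iff_imp.mp (h i' j) (decide_eq_true ⟨l, (Finset.mem_filter.mp hi').2, hlj⟩)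
  refine decide_eq_true ⟨closureConcept I (colSupport A l),
    Finset.mem_image_of_mem _ (Finset.mem_univ l), subset_dn_up _ ?_, hj⟩
  exact Finset.mem_filter.mpr ⟨Finset.mem_univ i, hil⟩

end Factors

lemma Ham_le_Ham_of_le {n m : ℕ} {I C D : Fin n → Fin m → Bool}
    (hCD : ∀ i j, C i j ≤ D i j) (hDI : ∀ i j, D i j ≤ I i j) : Ham I D ≤ Ham I C := by
  refine Finset.card_le_card (Finset.monotone_filter_right _ fun p _ hID hIC => hID ?_)
  exact le_antisymm (hIC ▸ hCD p.1 p.2) (hDI p.1 p.2)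

theorem from_below_concepts_optimal {n m k : ℕ} (I : Fin n → Fin m → Bool)
    (A : Fin n → Fin k → Bool) (B : Fin k → Fin m → Bool)
    (h : ∀ i j, bmul A B i j ≤ I i j) :
    ∃ F : Finset (Finset (Fin n) × Finset (Fin m)),
      (∀ p ∈ F, isConcept I p) ∧ F.card ≤ k ∧
      (∀ i j, cov F i j ≤ I i j) ∧
      Ham I (cov F) ≤ Ham I (bmul A B) := by
  have hconcepts : ∀ p ∈ factorConcepts I A, isConcept I p :=
    fun _ => isConcept_of_mem_factorConcepts
  have hcov : ∀ i j, cov (factorConcepts I A) i j ≤ I i j := cov_le_of_isConcept hconcepts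
  exact ⟨factorConcepts I A, hconcepts, card_factorConcepts_le I A, hcov,
    Ham_le_Ham_of_le (bmul_le_cov_factorConcepts h) hcov⟩
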